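/- Let Z¹,…,Zᴺ be i.i.d. N(0,σ²). Then E[exp(3Z¹)/(∑_{l=1}^N exp(Z^l))³] ≤ N⁻³ · exp(9σ²) · √N · exp(9σ²) = N^{−5/2} exp(18σ²). More precisely, E[e^{3Z¹}/(∑_l e^{Z^l})³] ≤ (1/N³)·E[e^{6Z¹}]^{1/2}·E[e^{−6Z⁽¹⁾}]^{1/2} where Z⁽¹⁾ = min_l Z^l. -/

import Mathlib

open MeasureTheory ProbabilityTheory Real

lemma gauss_key (v : NNReal) (hv : v ≠ 0) (t x : ℝ) :
    gaussianPDFReal 0 v x * Real.exp (t * x)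
      = Real.exp (t ^ 2 * v / 2) * gaussianPDFReal (t * v) v x := by
  have hv' : (v : ℝ) ≠ 0 := by exact_mod_cast hv
  rw [gaussianPDFReal, gaussianPDFReal, mul_assoc, ← Real.exp_add, mul_left_comm,
    ← Real.exp_add]
  congr 1
  field_simp
  ring

lemma integrable_exp_mul_gaussianReal (v : NNReal) (t : ℝ) :
    Integrable (fun x => Real.exp (t * x)) (gaussianReal 0 v) := by
  rcases eq_or_ne v 0 with rfl | hv
  · rw [gaussianReal_zero_var]
    exact (integrable_const (Real.exp (t * 0))).congr
      (MeasureTheory.ae_eq_dirac (fun x => Real.exp (t * x))).symm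
  · rw [gaussianReal_of_var_ne_zero _ hv,
      show gaussianPDF 0 v = (fun x => ((gaussianPDFReal 0 v x).toNNReal : ENNReal)) from rfl,
      integrable_withDensity_iff_integrable_smul ((measurable_gaussianPDFReal 0 v).real_toNNReal)]
    have : (fun x => (gaussianPDFReal 0 v x).toNNReal • Real.exp (t * x))
        = fun x => Real.exp (t ^ 2 * v / 2) * gaussianPDFReal (t * v) v x := by
      funext x
      rw [NNReal.smul_def, Real.coe_toNNReal _ (gaussianPDFReal_nonneg 0 v x), smul_eq_mul,
        gauss_key v hv]
    rw [this]
    exact (integrable_gaussianPDFReal _ _).const_mul _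

lemma integral_exp_mul_gaussianReal (v : NNReal) (t : ℝ) :
    ∫ x, Real.exp (t * x) ∂(gaussianReal 0 v) = Real.exp (t ^ 2 * v / 2) := by
  rcases eq_or_ne v 0 with rfl | hv
  · rw [gaussianReal_zero_var, integral_dirac]
    simp
  · rw [gaussianReal_of_var_ne_zero _ hv,
      show gaussianPDF 0 v = (fun x => ((gaussianPDFReal 0 v x).toNNReal : ENNReal)) from rfl,
      integral_withDensity_eq_integral_smul ((measurable_gaussianPDFReal 0 v).real_toNNReal)]
    have : (fun x => (gaussianPDFReal 0 v x).toNNReal • Real.exp (t * x))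
        = fun x => Real.exp (t ^ 2 * v / 2) * gaussianPDFReal (t * v) v x := by
      funext x
      rw [NNReal.smul_def, Real.coe_toNNReal _ (gaussianPDFReal_nonneg 0 v x), smul_eq_mul,
        gauss_key v hv]
    rw [this, integral_const_mul, integral_gaussianPDFReal_eq_one _ hv, mul_one]
lemma measurable_finset_inf' {ι Ω : Type*} [MeasurableSpace Ω] (f : ι → Ω → ℝ)
    (hf : ∀ i, Measurable (f i)) :
    ∀ (s : Finset ι) (hs : s.Nonempty), Measurable fun ω => s.inf' hs fun i => f i ω := by
  intro s
  induction s using Finset.cons_induction with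
  | empty => exact fun hs => absurd hs (by simp)
  | cons a s ha ih =>
    intro _
    rcases s.eq_empty_or_nonempty with rfl | hs'
    · simpa using hf a
    · simp only [Finset.inf'_cons (H := hs')]
      exact (hf a).inf (ih hs')

theorem self_normalized_weight_cube_bound {Ω : Type*} [MeasurableSpace Ω] (μ : Measure Ω)
    [IsProbabilityMeasure μ] (N : ℕ) (hN : 0 < N) (Z : Fin N → Ω → ℝ)
    (hmeas : ∀ i, Measurable (Z i))
    (hindep : iIndepFun Z μ)
    (σ2 : NNReal) (hgauss : ∀ i, Measure.map (Z i) μ = gaussianReal 0 σ2) :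
    (∫ ω, Real.exp (3 * Z ⟨0, hN⟩ ω) / (∑ l, Real.exp (Z l ω)) ^ 3 ∂μ
        ≤ (N : ℝ) ^ (-(5 : ℝ) / 2) * Real.exp (18 * (σ2 : ℝ))) ∧
    (∫ ω, Real.exp (3 * Z ⟨0, hN⟩ ω) / (∑ l, Real.exp (Z l ω)) ^ 3 ∂μ
        ≤ (1 / (N : ℝ) ^ 3) * (∫ ω, Real.exp (6 * Z ⟨0, hN⟩ ω) ∂μ) ^ ((1 : ℝ) / 2) *
          (∫ ω, Real.exp (-6 * Finset.univ.inf' ⟨⟨0, hN⟩, Finset.mem_univ _⟩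
              (fun l => Z l ω)) ∂μ) ^ ((1 : ℝ) / 2)) := by
  have hNpos : (0 : ℝ) < N := Nat.cast_pos.2 hN
  set i0 : Fin N := ⟨0, hN⟩ with hi0
  have hNe : (Finset.univ : Finset (Fin N)).Nonempty := ⟨i0, Finset.mem_univ _⟩
  set m : Ω → ℝ := fun ω => Finset.univ.inf' hNe (fun l => Z l ω) with hm
  have hm_meas : Measurable m := measurable_finset_inf' Z hmeas _ _
  -- integrability and values of exponential moments
  have hint : ∀ (t : ℝ) (i : Fin N), Integrable (fun ω => Real.exp (t * Z i ω)) μ := by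
    intro t i
    have h := integrable_exp_mul_gaussianReal σ2 t
    rw [← hgauss i] at h
    exact (integrable_map_measure
      (Measurable.aestronglyMeasurable (by fun_prop)) (hmeas i).aemeasurable).1 h
  have hival : ∀ (t : ℝ) (i : Fin N),
      ∫ ω, Real.exp (t * Z i ω) ∂μ = Real.exp (t ^ 2 * σ2 / 2) := by
    intro t i
    rw [← integral_exp_mul_gaussianReal σ2 t, ← hgauss i,
      integral_map (hmeas i).aemeasurable (Measurable.aestronglyMeasurable (by fun_prop))]
  -- integrability of exp(-6 m)
  have hm_bound : ∀ ω, Real.exp (-6 * m ω) ≤ ∑ l, Real.exp (-6 * Z l ω) := by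
    intro ω
    obtain ⟨j, _, hj⟩ := Finset.exists_mem_eq_inf' hNe fun l => Z l ω
    calc Real.exp (-6 * m ω) = Real.exp (-6 * Z j ω) := by rw [hm]; simp only [hj]
      _ ≤ ∑ l, Real.exp (-6 * Z l ω) :=
        Finset.single_le_sum (f := fun l => Real.exp (-6 * Z l ω))
          (fun l _ => (Real.exp_nonneg _)) (Finset.mem_univ j)
  have hsum_int : Integrable (fun ω => ∑ l, Real.exp (-6 * Z l ω)) μ :=
    integrable_finset_sum _ fun l _ => hint (-6) l
  have hm_int : Integrable (fun ω => Real.exp (-6 * m ω)) μ := by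
    refine hsum_int.mono' (Measurable.aestronglyMeasurable (by fun_prop)) ?_
    exact ae_of_all _ fun ω => by
      rw [Real.norm_eq_abs, abs_of_nonneg (Real.exp_nonneg _)]; exact hm_bound ω
  -- L² memberships
  have hsq1 : (fun ω => Real.exp (3 * Z i0 ω) ^ (2 : ℕ)) = fun ω => Real.exp (6 * Z i0 ω) := by
    funext ω; rw [← Real.exp_nat_mul]; norm_num; ring_nf
  have hsq2 : (fun ω => Real.exp (-3 * m ω) ^ (2 : ℕ)) = fun ω => Real.exp (-6 * m ω) := by
    funext ω; rw [← Real.exp_nat_mul]; norm_num; ring_nf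
  have hL2a : MemLp (fun ω => Real.exp (3 * Z i0 ω)) 2 μ := by
    refine (memLp_two_iff_integrable_sq (Measurable.aestronglyMeasurable (by fun_prop))).2 ?_
    rw [hsq1]; exact hint 6 i0
  have hL2b : MemLp (fun ω => Real.exp (-3 * m ω)) 2 μ := by
    refine (memLp_two_iff_integrable_sq (Measurable.aestronglyMeasurable (by fun_prop))).2 ?_
    rw [hsq2]; exact hm_int
  have hprod_int : Integrable (fun ω => Real.exp (3 * Z i0 ω) * Real.exp (-3 * m ω)) μ := by
    have h := hL2b.smul (φ := fun ω => Real.exp (3 * Z i0 ω)) hL2a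
      (p := 2) (q := 2) (r := 1)
      (hpqr := ⟨by simp only [one_div, inv_one, ENNReal.inv_two_add_inv_two]⟩)
    rw [memLp_one_iff_integrable] at h
    exact h.congr (ae_of_all _ fun ω => by simp [smul_eq_mul])
  -- pointwise bound
  have hpoint : ∀ ω, Real.exp (3 * Z i0 ω) / (∑ l, Real.exp (Z l ω)) ^ 3
      ≤ 1 / (N : ℝ) ^ 3 * (Real.exp (3 * Z i0 ω) * Real.exp (-3 * m ω)) := by
    intro ω
    have hS : (N : ℝ) * Real.exp (m ω) ≤ ∑ l, Real.exp (Z l ω) := by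
      have h := Finset.card_nsmul_le_sum Finset.univ (fun l => Real.exp (Z l ω))
        (Real.exp (m ω)) (fun l _ => Real.exp_le_exp.2 (Finset.inf'_le _ (Finset.mem_univ l)))
      simpa [nsmul_eq_mul, Finset.card_univ] using h
    have hpos : (0 : ℝ) < (N : ℝ) * Real.exp (m ω) := by positivity
    have h3 : ((N : ℝ) * Real.exp (m ω)) ^ 3 ≤ (∑ l, Real.exp (Z l ω)) ^ 3 :=
      pow_le_pow_left₀ hpos.le hS 3
    calc Real.exp (3 * Z i0 ω) / (∑ l, Real.exp (Z l ω)) ^ 3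
        ≤ Real.exp (3 * Z i0 ω) / ((N : ℝ) * Real.exp (m ω)) ^ 3 :=
          div_le_div_of_nonneg_left (Real.exp_nonneg _) (pow_pos hpos 3) h3
      _ = 1 / (N : ℝ) ^ 3 * (Real.exp (3 * Z i0 ω) * Real.exp (-3 * m ω)) := by
          rw [mul_pow, ← Real.exp_nat_mul, show (-3 : ℝ) * m ω = -((3:ℕ) * m ω) by push_cast; ring,
            Real.exp_neg]
          have hN3 : ((N : ℝ)) ^ 3 ≠ 0 := by positivity
          have hE : Real.exp ((3:ℕ) * m ω) ≠ 0 := Real.exp_ne_zero _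
          field_simp
  -- main chain
  have key : ∫ ω, Real.exp (3 * Z i0 ω) / (∑ l, Real.exp (Z l ω)) ^ 3 ∂μ
      ≤ 1 / (N : ℝ) ^ 3 * ((∫ ω, Real.exp (6 * Z i0 ω) ∂μ) ^ ((1:ℝ)/2)
        * (∫ ω, Real.exp (-6 * m ω) ∂μ) ^ ((1:ℝ)/2)) := by
    have step1 : ∫ ω, Real.exp (3 * Z i0 ω) / (∑ l, Real.exp (Z l ω)) ^ 3 ∂μ
        ≤ ∫ ω, 1 / (N : ℝ) ^ 3 * (Real.exp (3 * Z i0 ω) * Real.exp (-3 * m ω)) ∂μ :=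
      integral_mono_of_nonneg (ae_of_all _ fun ω => by positivity)
        (hprod_int.const_mul _) (ae_of_all _ hpoint)
    have h22 : (2:ℝ).HolderConjugate 2 := Real.HolderConjugate.two_two
    have h2 : (ENNReal.ofReal (2:ℝ)) = 2 := by norm_num [ENNReal.ofReal_ofNat]
    have holder := integral_mul_le_Lp_mul_Lq_of_nonneg h22
      (ae_of_all _ fun ω => Real.exp_nonneg (3 * Z i0 ω))
      (ae_of_all _ fun ω => Real.exp_nonneg (-3 * m ω)) (h2 ▸ hL2a) (h2 ▸ hL2b)
    have hr1 : (fun ω => Real.exp (3 * Z i0 ω) ^ (2:ℝ)) = fun ω => Real.exp (6 * Z i0 ω) := by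
      funext ω; rw [← Real.exp_mul]; norm_num; ring_nf
    have hr2 : (fun ω => Real.exp (-3 * m ω) ^ (2:ℝ)) = fun ω => Real.exp (-6 * m ω) := by
      funext ω; rw [← Real.exp_mul]; norm_num; ring_nf
    rw [hr1, hr2] at holder
    calc ∫ ω, Real.exp (3 * Z i0 ω) / (∑ l, Real.exp (Z l ω)) ^ 3 ∂μ
        ≤ ∫ ω, 1 / (N : ℝ) ^ 3 * (Real.exp (3 * Z i0 ω) * Real.exp (-3 * m ω)) ∂μ := step1
      _ = 1 / (N : ℝ) ^ 3 * ∫ ω, Real.exp (3 * Z i0 ω) * Real.exp (-3 * m ω) ∂μ :=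
          integral_const_mul _ _
      _ ≤ _ := by
          refine mul_le_mul_of_nonneg_left ?_ (by positivity)
          simpa using holder
  constructor
  · -- first bound
    have hA : ∫ ω, Real.exp (6 * Z i0 ω) ∂μ = Real.exp (18 * (σ2 : ℝ)) := by
      rw [hival 6 i0, show (6:ℝ)^2*(σ2:ℝ)/2 = 18*(σ2:ℝ) by ring]
    have hBnn : 0 ≤ ∫ ω, Real.exp (-6 * m ω) ∂μ :=
      integral_nonneg fun ω => Real.exp_nonneg _
    have hB : ∫ ω, Real.exp (-6 * m ω) ∂μ ≤ (N : ℝ) * Real.exp (18 * (σ2 : ℝ)) := by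
      calc ∫ ω, Real.exp (-6 * m ω) ∂μ ≤ ∫ ω, ∑ l, Real.exp (-6 * Z l ω) ∂μ :=
            integral_mono hm_int hsum_int hm_bound
        _ = ∑ l : Fin N, ∫ ω, Real.exp (-6 * Z l ω) ∂μ :=
            integral_finset_sum _ fun l _ => hint (-6) l
        _ = (N : ℝ) * Real.exp (18 * (σ2 : ℝ)) := by
            simp only [hival (-6)]
            rw [Finset.sum_const, Finset.card_univ, Fintype.card_fin, nsmul_eq_mul,
              show ((-6:ℝ))^2*(σ2:ℝ)/2 = 18*(σ2:ℝ) by ring]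
    refine key.trans ?_
    rw [hA]
    have h1 : (Real.exp (18 * (σ2:ℝ))) ^ ((1:ℝ)/2) = Real.exp (9 * σ2) := by
      rw [← Real.exp_mul, show (18*(σ2:ℝ))*(1/2) = 9*(σ2:ℝ) by ring]
    have h2 : (∫ ω, Real.exp (-6 * m ω) ∂μ) ^ ((1:ℝ)/2)
        ≤ (N:ℝ) ^ ((1:ℝ)/2) * Real.exp (9 * σ2) := by
      calc (∫ ω, Real.exp (-6 * m ω) ∂μ) ^ ((1:ℝ)/2)
          ≤ ((N : ℝ) * Real.exp (18 * (σ2:ℝ))) ^ ((1:ℝ)/2) :=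
            Real.rpow_le_rpow hBnn hB (by norm_num)
        _ = (N:ℝ) ^ ((1:ℝ)/2) * Real.exp (9 * σ2) := by
            rw [Real.mul_rpow (Nat.cast_nonneg N) (Real.exp_nonneg _), h1]
    have hpow : (1:ℝ) / (N:ℝ)^3 = (N:ℝ) ^ (-3:ℝ) := by
      rw [one_div, ← Real.rpow_natCast (N:ℝ) 3, ← Real.rpow_neg hNpos.le]
      norm_num
    calc 1 / (N:ℝ)^3 * (Real.exp (18*(σ2:ℝ)) ^ ((1:ℝ)/2) * (∫ ω, Real.exp (-6 * m ω) ∂μ) ^ ((1:ℝ)/2))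
        ≤ 1 / (N:ℝ)^3 * (Real.exp (18*(σ2:ℝ)) ^ ((1:ℝ)/2) * ((N:ℝ) ^ ((1:ℝ)/2) * Real.exp (9 * σ2))) := by
          refine mul_le_mul_of_nonneg_left (mul_le_mul_of_nonneg_left h2 ?_) (by positivity)
          positivity
      _ = (N:ℝ)^(-3:ℝ) * (N:ℝ)^((1:ℝ)/2) * (Real.exp (9*(σ2:ℝ)) * Real.exp (9*(σ2:ℝ))) := by
          rw [h1, hpow]; ring
      _ = (N : ℝ) ^ (-(5:ℝ)/2) * Real.exp (18 * (σ2:ℝ)) := by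
          rw [← Real.rpow_add hNpos, ← Real.exp_add,
            show (-3:ℝ)+(1:ℝ)/2 = -(5:ℝ)/2 by norm_num,
            show 9*(σ2:ℝ)+9*(σ2:ℝ) = 18*(σ2:ℝ) by ring]
  · refine key.trans (le_of_eq ?_)
    ring
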